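/- arXiv:1902.03854 — 2 statements merged into one kernel-verified Lean document; each statement's English description precedes it below -/
import Mathlib

section
/- Let D be a finite weighted directed graph without bilateral arcs, i.e., for all distinct nodes i, j it is not the case that both the arc (i,j) and the arc (j,i) are present (equivalently W_ij · W_ji = 0 for the weight matrix W of D). Let G be the undirected underlying graph of D, with weighted adjacency matrix W(G) = W + Wᵀ. Then for every stratus l = 0, 1, …, diam(G), the vector of directed local l-adjacency clustering coefficients of D equals one half of the vector of local l-adjacency clustering coefficients of G: c^all(l) = c(l)/2. -/
open Matrix Finset

/-- The weight of a walk: the sum of the weights of its (directed) edges. For a symmetric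
weight function this is the sum of the weights of the edges of the walk. -/
noncomputable def walkWeight {n : ℕ} {G : SimpleGraph (Fin n)} (w : Fin n → Fin n → ℝ)
    {i j : Fin n} (p : G.Walk i j) : ℝ :=
  (p.darts.map fun d => w d.fst d.snd).sum

/-- `wgeo G w i j l` is the minimum (infimum) over all walks of length `l` from `i` to `j`
of their total weights.  When `l = d(i,j)`, the walks of length `l` from `i` to `j` are
exactly the geodesics from `i` to `j`, so this is the quantity `w_ij(l)` of the paper. -/
noncomputable def wgeo {n : ℕ} (G : SimpleGraph (Fin n)) (w : Fin n → Fin n → ℝ)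
    (i j : Fin n) (l : ℕ) : ℝ :=
  sInf {x : ℝ | ∃ p : G.Walk i j, p.length = l ∧ walkWeight w p = x}

/-- `Nset G i l` is the set `N_i(l)` of nodes at geodesic distance `l` from `i`. -/
noncomputable def Nset {n : ℕ} (G : SimpleGraph (Fin n)) (i : Fin n) (l : ℕ) : Finset (Fin n) :=
  Finset.univ.filter fun j => G.dist i j = l

/-- The `l`-th order strength `s_i(l) = ∑_{j ∈ N_i(l)} w_ij(l)` of node `i`. -/
noncomputable def lStrength {n : ℕ} (G : SimpleGraph (Fin n)) (w : Fin n → Fin n → ℝ)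
    (i : Fin n) (l : ℕ) : ℝ :=
  ∑ j ∈ Nset G i l, wgeo G w i j l

/-- The matrix `P(l)`: `P(0)` is the identity matrix, and for `l ≥ 1` its `(i,j)` entry is
`w_ij(l)/s_i(l)` if `j ∈ N_i(l)` (a condition which in particular forces `N_i(l) ≠ ∅`),
and `0` otherwise. -/
noncomputable def Pmat {n : ℕ} (G : SimpleGraph (Fin n)) (w : Fin n → Fin n → ℝ)
    (l : ℕ) : Matrix (Fin n) (Fin n) ℝ :=
  if l = 0 then 1
  else Matrix.of fun i j =>
    if G.dist i j = l then wgeo G w i j l / lStrength G w i l else 0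


/-- The binary adjacency matrix of a nonnegative weight matrix `M`:
entry `(i,j)` is `1` iff `0 < M i j`, else `0`. -/
noncomputable def binAdj {n : ℕ} (M : Matrix (Fin n) (Fin n) ℝ) :
    Matrix (Fin n) (Fin n) ℝ :=
  Matrix.of fun i j => if 0 < M i j then (1 : ℝ) else 0

/-- The Barrat weighted clustering coefficient of node `i` for the (undirected) weighted
adjacency matrix `WG`: `c_i = [WG • A(G)²]_ii / (s_i (d_i - 1))`, where `A(G)` is the binary
adjacency matrix of `WG`, `s_i = ∑ j, WG i j` and `d_i = ∑ j, A(G) i j`. -/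
noncomputable def barratCC {n : ℕ} (WG : Matrix (Fin n) (Fin n) ℝ) (i : Fin n) : ℝ :=
  (WG * (binAdj WG) ^ 2) i i / ((∑ j, WG i j) * ((∑ j, binAdj WG i j) - 1))

/-- The Clemente–Grassi directed clustering coefficient of node `i` for the weight matrix `W`
of a directed graph:
`c_i^all = (1/2)[(W+Wᵀ)(A+Aᵀ)²]_ii / (s_i^tot (d_i^tot - 1) - 2 s_i^↔)`. -/
noncomputable def dirCC {n : ℕ} (W : Matrix (Fin n) (Fin n) ℝ) (i : Fin n) : ℝ :=
  (1 / 2) * ((W + Wᵀ) * (binAdj W + (binAdj W)ᵀ) ^ 2) i i /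
    ((∑ j, (W i j + W j i)) * ((∑ j, (binAdj W i j + binAdj W j i)) - 1)
      - 2 * ((1 / 2) * ∑ j, (W i j + W j i) * binAdj W i j * binAdj W j i))

/-- The undirected underlying graph `G` of the weighted directed graph `W`:
`i` and `j` are adjacent iff `i ≠ j` and `(W + Wᵀ) i j > 0`. -/
def underlying {n : ℕ} (W : Matrix (Fin n) (Fin n) ℝ) : SimpleGraph (Fin n) where
  Adj i j := i ≠ j ∧ 0 < (W + Wᵀ) i j
  symm := ⟨fun i j h =>
    ⟨h.1.symm, by
      have := h.2
      simp only [Matrix.add_apply, Matrix.transpose_apply] at this ⊢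
      linarith⟩⟩
  loopless := ⟨fun i h => h.1 rfl⟩

/- Without bilateral arcs, at most one of `W i j`, `W j i` is nonzero, so the directed binary
adjacency `A + Aᵀ` is the binary adjacency of `W + Wᵀ` and the bilateral strength `s_i^↔`
vanishes. The Clemente–Grassi coefficient is then literally half the Barrat coefficient of the
underlying graph, node by node, and the stratified versions agree because `c ↦ P(l) c` is
linear. -/

section NoBilateralArcs

variable {n : ℕ} {W : Matrix (Fin n) (Fin n) ℝ}

lemma apply_mul_apply_swap_eq_zero (hdiag : ∀ i, W i i = 0)
    (hnobil : ∀ i j, i ≠ j → W i j * W j i = 0) (i j : Fin n) : W i j * W j i = 0 := by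
  rcases eq_or_ne i j with rfl | hij
  · simp [hdiag]
  · exact hnobil i j hij

variable (hW : ∀ i j, W i j * W j i = 0)
include hW

lemma binAdj_add_binAdj_swap (i j : Fin n) :
    binAdj W i j + binAdj W j i = binAdj (W + Wᵀ) i j := by
  rcases mul_eq_zero.mp (hW i j) with h | h <;> simp [binAdj, h]

lemma binAdj_add_transpose : binAdj W + (binAdj W)ᵀ = binAdj (W + Wᵀ) := by
  ext i j
  exact binAdj_add_binAdj_swap hW i j

lemma binAdj_mul_binAdj_swap_eq_zero (i j : Fin n) : binAdj W i j * binAdj W j i = 0 := by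
  rcases mul_eq_zero.mp (hW i j) with h | h <;> simp [binAdj, h]

lemma dirCC_eq_half_barratCC_s0 : dirCC W = (1 / 2 : ℝ) • barratCC (W + Wᵀ) := by
  funext i
  have hdeg : ∑ j, (binAdj W i j + binAdj W j i) = ∑ j, binAdj (W + Wᵀ) i j :=
    sum_congr rfl fun j _ => binAdj_add_binAdj_swap hW i j
  have hrecip : ∑ j, (W i j + W j i) * binAdj W i j * binAdj W j i = 0 :=
    sum_eq_zero fun j _ => by rw [mul_assoc, binAdj_mul_binAdj_swap_eq_zero hW, mul_zero]
  simp only [dirCC, barratCC, binAdj_add_transpose hW, hdeg, hrecip, Pi.smul_apply,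
    smul_eq_mul, mul_zero, sub_zero]
  exact mul_div_assoc _ _ _

end NoBilateralArcs

theorem dir_l_adjacency_clustering_eq_half_undirected_general {n : ℕ}
    (W : Matrix (Fin n) (Fin n) ℝ)
    (hdiag : ∀ i, W i i = 0)
    (hnobil : ∀ i j, i ≠ j → W i j * W j i = 0) :
    ∀ l ≤ (underlying W).diam,
      Pmat (underlying W) (fun a b => (W + Wᵀ) a b) l *ᵥ dirCC W
        = (1 / 2 : ℝ) • (Pmat (underlying W) (fun a b => (W + Wᵀ) a b) l *ᵥ barratCC (W + Wᵀ)) := by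
  intro l _
  rw [dirCC_eq_half_barratCC_s0 (apply_mul_apply_swap_eq_zero hdiag hnobil),
    mulVec_smul]

/-- **Proposition 1.** Let `D` be a finite weighted directed graph without
bilateral arcs (`W i j * W j i = 0` for `i ≠ j`), and let `G` be its undirected underlying
graph, with weighted adjacency matrix `W + Wᵀ`.  Then for every stratus
`l = 0, 1, …, diam(G)`, the vector of directed local `l`-adjacency clustering coefficients
equals one half of the vector of local `l`-adjacency clustering coefficients of `G`:
`c^all(l) = c(l)/2`. -/
theorem dir_l_adjacency_clustering_eq_half_undirected {n : ℕ}
    (W : Matrix (Fin n) (Fin n) ℝ)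
    (hnonneg : ∀ i j, 0 ≤ W i j) (hdiag : ∀ i, W i i = 0)
    (hnobil : ∀ i j, i ≠ j → W i j * W j i = 0)
    (hconn : (underlying W).Connected) :
    ∀ l ≤ (underlying W).diam,
      Pmat (underlying W) (fun a b => (W + Wᵀ) a b) l *ᵥ dirCC W
        = (1 / 2 : ℝ) • (Pmat (underlying W) (fun a b => (W + Wᵀ) a b) l *ᵥ barratCC (W + Wᵀ)) :=
  dir_l_adjacency_clustering_eq_half_undirected_general W hdiag hnobil
end

section
/- Let D be a finite weighted directed graph without bilateral arcs, with weight matrix W, binary adjacency A, and underlying undirected graph G with weighted adjacency W(G) = W + Wᵀ and binary adjacency A(G). Then for every node i, the directed clustering coefficient satisfies c_i^all = (1/2)·[W(G)·A(G)²]_ii / (s_i(1,G)(d_i(1,G) − 1)) = c_i / 2, where c_i is the Barrat weighted clustering coefficient of node i in G. -/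
/-!
Without bilateral arcs at most one of `W i j`, `W j i` is nonzero, so the binary adjacency of
`W + Wᵀ` is `A + Aᵀ` and the bilateral strength `s_i^↔` vanishes; the Clemente–Grassi formula
then becomes half of Barrat's formula for the underlying undirected graph.
-/

open Matrix Finset

section binAdj

variable {n : ℕ} {M : Matrix (Fin n) (Fin n) ℝ}

lemma binAdj_mul_binAdj_eq_zero {i j k l : Fin n} (h : M i j * M k l = 0) :
    binAdj M i j * binAdj M k l = 0 := by
  rcases mul_eq_zero.mp h with h | h <;> simp [binAdj, h]

lemma binAdj_add_transpose_s1 (hbil : ∀ i j, M i j * M j i = 0) :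
    binAdj (M + Mᵀ) = binAdj M + (binAdj M)ᵀ := by
  ext i j
  rcases mul_eq_zero.mp (hbil i j) with h | h <;> simp [binAdj, h]

end binAdj

theorem dirCC_eq_of_forall_mul_transpose_eq_zero {n : ℕ} {W : Matrix (Fin n) (Fin n) ℝ}
    (hbil : ∀ i j, W i j * W j i = 0) (i : Fin n) :
    dirCC W i = (1 / 2) * ((W + Wᵀ) * (binAdj (W + Wᵀ)) ^ 2) i i /
      ((∑ j, (W + Wᵀ) i j) * ((∑ j, binAdj (W + Wᵀ) i j) - 1)) := by
  have hbilStrength : ∑ j, (W i j + W j i) * binAdj W i j * binAdj W j i = 0 :=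
    sum_eq_zero fun j _ => by
      rw [mul_assoc, binAdj_mul_binAdj_eq_zero (hbil i j), mul_zero]
  rw [dirCC, hbilStrength, binAdj_add_transpose_s1 hbil]
  simp only [Matrix.add_apply, transpose_apply, mul_zero, sub_zero]

theorem dirCC_eq_half_barratCC_general {n : ℕ}
    (W : Matrix (Fin n) (Fin n) ℝ)
    (hdiag : ∀ i, W i i = 0)
    (hnobil : ∀ i j, i ≠ j → W i j * W j i = 0) (i : Fin n) :
    dirCC W i
        = (1 / 2) * ((W + Wᵀ) * (binAdj (W + Wᵀ)) ^ 2) i i /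
            ((∑ j, (W + Wᵀ) i j) * ((∑ j, binAdj (W + Wᵀ) i j) - 1))
      ∧ dirCC W i = barratCC (W + Wᵀ) i / 2 := by
  have hbil : ∀ i j, W i j * W j i = 0 := fun i j => by
    rcases eq_or_ne i j with rfl | hij
    · rw [hdiag, mul_zero]
    · exact hnobil i j hij
  have hdir := dirCC_eq_of_forall_mul_transpose_eq_zero hbil i
  refine ⟨hdir, hdir.trans ?_⟩
  rw [barratCC]
  ring

/-- **Proposition, pointwise form.** If the weighted directed graph `W` has no
bilateral arcs, then for every node `i` the directed clustering coefficient satisfies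
`c_i^all = (1/2)·[W(G)·A(G)²]_ii / (s_i(1,G)(d_i(1,G) − 1)) = c_i / 2`, where `W(G) = W + Wᵀ`
is the weighted adjacency matrix of the undirected underlying graph `G` and `c_i` is the Barrat
weighted clustering coefficient of `i` in `G`. -/
theorem dirCC_eq_half_barratCC {n : ℕ}
    (W : Matrix (Fin n) (Fin n) ℝ)
    (hnonneg : ∀ i j, 0 ≤ W i j) (hdiag : ∀ i, W i i = 0)
    (hnobil : ∀ i j, i ≠ j → W i j * W j i = 0) (i : Fin n) :
    dirCC W i
        = (1 / 2) * ((W + Wᵀ) * (binAdj (W + Wᵀ)) ^ 2) i i /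
            ((∑ j, (W + Wᵀ) i j) * ((∑ j, binAdj (W + Wᵀ) i j) - 1))
      ∧ dirCC W i = barratCC (W + Wᵀ) i / 2 :=
  dirCC_eq_half_barratCC_general W hdiag hnobil i
end
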